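/- The number of Dyck paths of semi-length n that are invariant under reversal (reversing the step sequence and swapping up-steps with down-steps yields the same path) equals binomial(n, ⌊n/2⌋). -/

import Mathlib

/-- A Dyck word: `true` = up-step `U`, `false` = down-step `D`; every prefix has at
least as many up-steps as down-steps. -/
def IsDyckWord (l : List Bool) : Prop :=
  ∀ k, (l.take k).count false ≤ (l.take k).count true

/-- A Dyck path of semi-length `n`. -/
def IsDyckPath (n : Nat) (l : List Bool) : Prop :=
  l.length = 2 * n ∧ l.count true = n ∧ IsDyckWord l

/-- Reversal of a Dyck path: reverse the step sequence and swap `U` and `D`. -/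
def dyckRev (l : List Bool) : List Bool := l.reverse.map (fun b => !b)

/-! ### Auxiliary definitions -/

/-- Words that stay nonnegative when started at height `c`. -/
def Pre (c : ℕ) (l : List Bool) : Prop :=
  ∀ k, (l.take k).count false ≤ c + (l.take k).count true

/-- Set of nonnegative-from-`c` words of length `n`. -/
def Ball (c n : ℕ) : Set (List Bool) := {l | l.length = n ∧ Pre c l}

/-- Closed-form count: sum of binomials over a middle interval. -/
def Uu (c n : ℕ) : ℕ := ∑ k ∈ Finset.Icc ((n + c) / 2 - c) ((n + c) / 2), n.choose k

/-! ### Arithmetic lemmas -/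

lemma sumR (n : ℕ) : ∀ m, ∑ k ∈ Finset.range (m + 1), (n + 1).choose k
    = ∑ k ∈ Finset.range (m + 1), n.choose k + ∑ k ∈ Finset.range m, n.choose k := by
  intro m
  induction m with
  | zero => simp
  | succ m ih =>
    rw [Finset.sum_range_succ, ih, Finset.sum_range_succ (f := fun k => n.choose k) (n := m + 1),
      Finset.sum_range_succ (f := fun k => n.choose k) (n := m), Nat.choose_succ_succ]
    ring

lemma sumP (n a b : ℕ) (hab : a ≤ b) :
    ∑ k ∈ Finset.Icc a (b + 1), (n + 1).choose k
      = ∑ k ∈ Finset.Icc (a - 1) (b + 1), n.choose k + ∑ k ∈ Finset.Icc a b, n.choose k := by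
  have h1 : ∑ k ∈ Finset.range a, (n + 1).choose k + ∑ k ∈ Finset.Icc a (b + 1), (n + 1).choose k
      = ∑ k ∈ Finset.range (b + 2), (n + 1).choose k := by
    rw [← Finset.Ico_add_one_right_eq_Icc a (b + 1)]
    exact Finset.sum_range_add_sum_Ico _ (by omega)
  have h2 : ∑ k ∈ Finset.range (a - 1), n.choose k + ∑ k ∈ Finset.Icc (a - 1) (b + 1), n.choose k
      = ∑ k ∈ Finset.range (b + 2), n.choose k := by
    rw [← Finset.Ico_add_one_right_eq_Icc (a - 1) (b + 1)]
    exact Finset.sum_range_add_sum_Ico _ (by omega)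
  have h3 : ∑ k ∈ Finset.range a, n.choose k + ∑ k ∈ Finset.Icc a b, n.choose k
      = ∑ k ∈ Finset.range (b + 1), n.choose k := by
    rw [← Finset.Ico_add_one_right_eq_Icc a b]
    exact Finset.sum_range_add_sum_Ico _ (by omega)
  have hRb : ∑ k ∈ Finset.range (b + 2), (n + 1).choose k
      = ∑ k ∈ Finset.range (b + 2), n.choose k + ∑ k ∈ Finset.range (b + 1), n.choose k :=
    sumR n (b + 1)
  have hRa : ∑ k ∈ Finset.range a, (n + 1).choose k
      = ∑ k ∈ Finset.range a, n.choose k + ∑ k ∈ Finset.range (a - 1), n.choose k := by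
    rcases a with _ | a'
    · simp
    · simpa using sumR n a'
  omega

lemma Uu_step0 (n : ℕ) : Uu 0 (n + 1) = Uu 1 n := by
  rcases n with _ | n'
  · decide
  · obtain ⟨b', hb⟩ : ∃ b', (n' + 1 + 1) / 2 = b' + 1 := ⟨(n' + 1 + 1) / 2 - 1, by omega⟩
    unfold Uu
    have e1 : (n' + 1 + 1 + 0) / 2 = b' + 1 := by omega
    have e2 : (n' + 1 + 1 + 0) / 2 - 0 = b' + 1 := by omega
    have e3 : (n' + 1 + 1) / 2 = b' + 1 := by omega
    have e4 : (n' + 1 + 1) / 2 - 1 = b' := by omega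
    rw [e2, e4, e1, Finset.Icc_self, Finset.sum_singleton,
      Finset.sum_Icc_succ_top (by omega), Finset.Icc_self, Finset.sum_singleton,
      Nat.choose_succ_succ]

lemma Uu_step1 (c n : ℕ) : Uu (c + 1) (n + 1) = Uu (c + 2) n + Uu c n := by
  unfold Uu
  have e1 : (n + 1 + (c + 1)) / 2 = (n + c) / 2 + 1 := by omega
  have e2 : (n + 1 + (c + 1)) / 2 - (c + 1) = (n + c) / 2 - c := by omega
  have e3 : (n + (c + 2)) / 2 = (n + c) / 2 + 1 := by omega
  have e4 : (n + (c + 2)) / 2 - (c + 2) = (n + c) / 2 - c - 1 := by omega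
  rw [e2, e1, e4, e3]
  exact sumP n ((n + c) / 2 - c) ((n + c) / 2) (by omega)

/-! ### Counting the ballot words -/

lemma pre_nil (c : ℕ) : Pre c [] := fun k => by simp

lemma pre_cons_true {c : ℕ} {l : List Bool} : Pre c (true :: l) ↔ Pre (c + 1) l := by
  constructor
  · intro h k
    have h2 := h (k + 1)
    rw [List.take_succ_cons] at h2
    simp [List.count_cons] at h2
    omega
  · intro h k
    cases k with
    | zero => simp
    | succ k =>
      rw [List.take_succ_cons]
      have := h k
      simp [List.count_cons]
      omega

lemma pre_cons_false {c : ℕ} {l : List Bool} : Pre c (false :: l) ↔ 1 ≤ c ∧ Pre (c - 1) l := by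
  constructor
  · intro h
    have h1 := h 1
    simp at h1
    refine ⟨h1, fun k => ?_⟩
    have h2 := h (k + 1)
    rw [List.take_succ_cons] at h2
    simp [List.count_cons] at h2
    omega
  · rintro ⟨hc, h⟩ k
    cases k with
    | zero => simp
    | succ k =>
      rw [List.take_succ_cons]
      have := h k
      simp [List.count_cons]
      omega

lemma Ball_finite (c n : ℕ) : (Ball c n).Finite :=
  (List.finite_length_eq Bool n).subset fun _ h => h.1

lemma Ball_zero (c : ℕ) : Ball c 0 = {[]} := by
  ext l
  constructor
  · rintro ⟨h1, _⟩
    exact List.length_eq_zero_iff.mp h1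
  · rintro rfl
    exact ⟨rfl, pre_nil c⟩

lemma Ball_succ_zero (n : ℕ) : Ball 0 (n + 1) = (true :: ·) '' Ball 1 n := by
  ext l
  constructor
  · rintro ⟨hl, hp⟩
    match l with
    | [] => simp at hl
    | true :: t => exact ⟨t, ⟨by simpa using hl, pre_cons_true.mp hp⟩, rfl⟩
    | false :: t =>
      have := (pre_cons_false.mp hp).1
      omega
  · rintro ⟨t, ⟨hl, hp⟩, rfl⟩
    exact ⟨by simp [hl], pre_cons_true.mpr hp⟩

lemma Ball_succ_succ (c n : ℕ) :
    Ball (c + 1) (n + 1) = (true :: ·) '' Ball (c + 2) n ∪ (false :: ·) '' Ball c n := by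
  ext l
  constructor
  · rintro ⟨hl, hp⟩
    match l with
    | [] => simp at hl
    | true :: t => exact Or.inl ⟨t, ⟨by simpa using hl, pre_cons_true.mp hp⟩, rfl⟩
    | false :: t =>
      refine Or.inr ⟨t, ⟨by simpa using hl, ?_⟩, rfl⟩
      simpa using (pre_cons_false.mp hp).2
  · rintro (⟨t, ⟨hl, hp⟩, rfl⟩ | ⟨t, ⟨hl, hp⟩, rfl⟩)
    · exact ⟨by simp [hl], pre_cons_true.mpr hp⟩
    · exact ⟨by simp [hl], pre_cons_false.mpr ⟨by omega, by simpa using hp⟩⟩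

lemma sum_choose_zero : ∀ m, ∑ k ∈ Finset.Icc 0 m, Nat.choose 0 k = 1 := by
  intro m
  induction m with
  | zero => simp
  | succ m ih =>
    rw [Finset.sum_Icc_succ_top (Nat.zero_le _), ih, Nat.choose_eq_zero_of_lt (by omega)]

lemma Ball_card (n : ℕ) : ∀ c, (Ball c n).ncard = Uu c n := by
  induction n with
  | zero =>
    intro c
    rw [Ball_zero, Set.ncard_singleton]
    unfold Uu
    have e : (0 + c) / 2 - c = 0 := by omega
    rw [e, sum_choose_zero]
  | succ n ih =>
    intro c
    cases c with
    | zero =>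
      rw [Ball_succ_zero, Set.ncard_image_of_injective _ (List.cons_injective), ih 1,
        Uu_step0]
    | succ c =>
      rw [Ball_succ_succ, Set.ncard_union_eq ?disj ((Ball_finite _ _).image _)
          ((Ball_finite _ _).image _),
        Set.ncard_image_of_injective _ (List.cons_injective),
        Set.ncard_image_of_injective _ (List.cons_injective), ih (c + 2), ih c, Uu_step1]
      case disj =>
        rw [Set.disjoint_left]
        rintro x ⟨a, _, rfl⟩ ⟨b, _, h⟩
        exact Bool.noConfusion (List.head_eq_of_cons_eq h.symm)

/-! ### List lemmas -/

lemma count_map_not (b : Bool) (l : List Bool) :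
    (l.map (fun x => !x)).count b = l.count (!b) := by
  have := List.count_map_of_injective l (fun x => !x)
    (fun x y h => by cases x <;> cases y <;> simp_all) (!b)
  simpa using this

lemma count_true_add_count_false (l : List Bool) : l.count true + l.count false = l.length := by
  induction l with
  | nil => simp
  | cons h t ih => cases h <;> simp [List.count_cons] <;> omega

lemma dyckRev_eq (l : List Bool) : dyckRev l = (l.map (fun b => !b)).reverse := by
  simp [dyckRev, List.map_reverse]

lemma dyckRev_length (l : List Bool) : (dyckRev l).length = l.length := by
  simp [dyckRev]

lemma dyckRev_dyckRev (l : List Bool) : dyckRev (dyckRev l) = l := by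
  simp [dyckRev, List.map_reverse, List.map_map, Function.comp_def, Bool.not_not]

lemma dyckRev_append (a b : List Bool) : dyckRev (a ++ b) = dyckRev b ++ dyckRev a := by
  simp [dyckRev_eq]

lemma reverse_take (n : ℕ) (l : List Bool) :
    (l.take n).reverse = l.reverse.drop (l.length - n) := by
  have h := List.take_reverse (xs := l.reverse) (i := n)
  rw [List.reverse_reverse, List.length_reverse] at h
  rw [h, List.reverse_reverse]

/-! ### The bijection -/

lemma key_eq (n : ℕ) :
    {l : List Bool | IsDyckPath n l ∧ dyckRev l = l}
      = (fun w => w ++ dyckRev w) '' Ball 0 n := by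
  ext l
  constructor
  · rintro ⟨⟨hlen, _hct, hdw⟩, hrev⟩
    refine ⟨l.take n, ⟨by rw [List.length_take, hlen]; omega,
      fun k => by rw [List.take_take]; simpa using hdw _⟩, ?_⟩
    have hdrop : dyckRev (l.take n) = l.drop n := by
      rw [dyckRev_eq, List.map_take, reverse_take]
      rw [← dyckRev_eq, hrev]
      congr 1
      rw [List.length_map, hlen]
      omega
    show l.take n ++ dyckRev (l.take n) = l
    rw [hdrop, List.take_append_drop]
  · rintro ⟨w, ⟨hwlen, hpre⟩, rfl⟩
    have hctf := count_true_add_count_false w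
    have hcv_t : (dyckRev w).count true = w.count false := by
      rw [dyckRev_eq, List.count_reverse, count_map_not]; simp
    have hcv_f : (dyckRev w).count false = w.count true := by
      rw [dyckRev_eq, List.count_reverse, count_map_not]; simp
    refine ⟨⟨by rw [List.length_append, dyckRev_length, hwlen]; omega, ?_, ?_⟩, ?_⟩
    · rw [List.count_append, hcv_t]
      omega
    · -- IsDyckWord (w ++ dyckRev w)
      intro k
      by_cases hk : k ≤ n
      · rw [List.take_append_of_le_length (by omega)]
        have := hpre k
        omega
      · have hk2 : k = w.length + (k - n) := by omega
        rw [hk2, List.take_append, Nat.add_sub_cancel_left,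
          List.take_of_length_le (Nat.le_add_right _ _)]
        set j := k - n with hj
        have htj : (dyckRev w).take j = ((w.map (fun b => !b)).drop (w.length - j)).reverse := by
          rw [dyckRev_eq, List.take_reverse]
          simp
        set m := w.length - j with hm
        have hf : ((dyckRev w).take j).count false = (w.drop m).count true := by
          rw [htj, List.count_reverse, ← List.map_drop, count_map_not]; simp
        have ht : ((dyckRev w).take j).count true = (w.drop m).count false := by
          rw [htj, List.count_reverse, ← List.map_drop, count_map_not]; simp
        rw [List.count_append, List.count_append, hf, ht]
        have e1 : w.count false = (w.take m).count false + (w.drop m).count false := by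
          rw [← List.count_append, List.take_append_drop]
        have e2 : w.count true = (w.take m).count true + (w.drop m).count true := by
          rw [← List.count_append, List.take_append_drop]
        have hp := hpre m
        omega
    · rw [dyckRev_append, dyckRev_dyckRev]

lemma append_dyckRev_injective : Function.Injective (fun w : List Bool => w ++ dyckRev w) := by
  intro a b h
  simp only at h
  have hlen : a.length = b.length := by
    have := congrArg List.length h
    simp [dyckRev_length] at this
    omega
  have := congrArg (List.take a.length) h
  rw [List.take_append_of_le_length (le_refl _), List.take_length, hlen,
    List.take_append_of_le_length (le_refl _), List.take_length] at this
  exact this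

theorem stmt11 (n : Nat) :
    Set.ncard {l : List Bool | IsDyckPath n l ∧ dyckRev l = l} = n.choose (n / 2) := by
  rw [key_eq, Set.ncard_image_of_injective _ append_dyckRev_injective, Ball_card n 0]
  unfold Uu
  simp
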